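/- Define the mean U¹(v) = Σ_{i∈S} r_i v_i / D(v), the second moment U²(v) = Σ_{i∈S} r_i² v_i / D(v), and the variance σ²(v) = U²(v) − (U¹(v))². Then (a) 0 ≤ σ²(v) ≤ 1/4 for every v ∈ [0,1]^S; and (b) for all v ≤ v' in [0,1]^S, |σ²(v') − σ²(v)| ≤ (6/D(v)) · Σ_{i∈S}(v'_i − v_i). -/
import Mathlib


/-- `D(v) = 1 + ∑_{i∈S} v i`, the MNL normalization constant. -/
noncomputable def mnlD {ι : Type*} (S : Finset ι) (v : ι → ℝ) : ℝ := 1 + ∑ i ∈ S, v i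

/-- The mean of the MNL purchase-profit distribution. -/
noncomputable def mnlMean {ι : Type*} (S : Finset ι) (r : ι → ℝ) (v : ι → ℝ) : ℝ :=
  (∑ i ∈ S, r i * v i) / mnlD S v

/-- The second moment of the MNL purchase-profit distribution. -/
noncomputable def mnlSecondMoment {ι : Type*} (S : Finset ι) (r : ι → ℝ) (v : ι → ℝ) : ℝ :=
  (∑ i ∈ S, r i ^ 2 * v i) / mnlD S v

/-- The variance of the MNL purchase-profit distribution. -/
noncomputable def mnlVar {ι : Type*} (S : Finset ι) (r : ι → ℝ) (v : ι → ℝ) : ℝ :=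
  mnlSecondMoment S r v - (mnlMean S r v) ^ 2

private lemma mnlD_pos {ι : Type*} (S : Finset ι) (v : ι → ℝ) (hv : ∀ i ∈ S, 0 ≤ v i) :
    0 < mnlD S v := by
  have : 0 ≤ ∑ i ∈ S, v i := Finset.sum_nonneg hv
  unfold mnlD; linarith

/-- Ratio lemma: for weights `a ∈ [0,1]`, the map `v ↦ (∑ a v)/D(v)` is Lipschitz. -/
private lemma mnl_ratio_lipschitz {ι : Type*} (S : Finset ι) (a v v' : ι → ℝ)
    (ha : ∀ i ∈ S, 0 ≤ a i ∧ a i ≤ 1)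
    (hv : ∀ i ∈ S, 0 ≤ v i) (hv' : ∀ i ∈ S, 0 ≤ v' i)
    (hle : ∀ i ∈ S, v i ≤ v' i) :
    |(∑ i ∈ S, a i * v' i) / mnlD S v' - (∑ i ∈ S, a i * v i) / mnlD S v|
      ≤ (∑ i ∈ S, (v' i - v i)) / mnlD S v := by
  set D := mnlD S v with hDdef
  set D' := mnlD S v' with hD'def
  set A : ℝ := ∑ i ∈ S, a i * v i with hAdef
  set A' : ℝ := ∑ i ∈ S, a i * v' i with hA'def
  set Δ : ℝ := ∑ i ∈ S, (v' i - v i) with hΔdef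
  have hD : 0 < D := mnlD_pos S v hv
  have hD' : 0 < D' := mnlD_pos S v' hv'
  have hDD' : D ≤ D' := by
    unfold D D'; unfold mnlD
    have := Finset.sum_le_sum hle
    linarith
  have hΔ0 : 0 ≤ Δ := Finset.sum_nonneg fun i hi => by linarith [hle i hi]
  have hA0 : 0 ≤ A := Finset.sum_nonneg fun i hi =>
    mul_nonneg (ha i hi).1 (hv i hi)
  have hAD : A ≤ D := by
    have h1 : A ≤ ∑ i ∈ S, v i := Finset.sum_le_sum fun i hi => by
      have := (ha i hi).2
      nlinarith [hv i hi, (ha i hi).1]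
    unfold D; unfold mnlD; linarith
  have hE : A' - A ≤ Δ := by
    have : A' - A = ∑ i ∈ S, a i * (v' i - v i) := by
      rw [hA'def, hAdef, ← Finset.sum_sub_distrib]
      exact Finset.sum_congr rfl fun i _ => by ring
    rw [this]
    refine Finset.sum_le_sum fun i hi => ?_
    nlinarith [(ha i hi).1, (ha i hi).2, hle i hi]
  have hE0 : A ≤ A' := Finset.sum_le_sum fun i hi => by
    nlinarith [(ha i hi).1, hle i hi]
  have hD'eq : D' = D + Δ := by
    unfold D D' Δ; unfold mnlD
    rw [Finset.sum_sub_distrib]; ring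
  have key : |A' * D - D' * A| ≤ Δ * D := by
    rw [abs_sub_le_iff]
    constructor <;> nlinarith
  have heq : A' / D' - A / D = (A' * D - D' * A) / (D' * D) :=
    div_sub_div _ _ (ne_of_gt hD') (ne_of_gt hD)
  rw [heq, abs_div, abs_of_pos (mul_pos hD' hD)]
  rw [div_le_div_iff₀ (mul_pos hD' hD) hD]
  calc |A' * D - D' * A| * D ≤ (Δ * D) * D := by nlinarith [abs_nonneg (A' * D - D' * A)]
    _ ≤ Δ * (D' * D) := by nlinarith [mul_nonneg (mul_nonneg hΔ0 (sub_nonneg.mpr hDD')) hD.le]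

/-- For weights `a ∈ [0,1]`, the ratio `(∑ a v)/D(v)` lies in `[0,1]`. -/
private lemma mnl_ratio_mem {ι : Type*} (S : Finset ι) (a v : ι → ℝ)
    (ha : ∀ i ∈ S, 0 ≤ a i ∧ a i ≤ 1) (hv : ∀ i ∈ S, 0 ≤ v i) :
    0 ≤ (∑ i ∈ S, a i * v i) / mnlD S v ∧ (∑ i ∈ S, a i * v i) / mnlD S v ≤ 1 := by
  have hD : 0 < mnlD S v := mnlD_pos S v hv
  have hA0 : 0 ≤ ∑ i ∈ S, a i * v i := Finset.sum_nonneg fun i hi =>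
    mul_nonneg (ha i hi).1 (hv i hi)
  have hAD : (∑ i ∈ S, a i * v i) ≤ mnlD S v := by
    have h1 : (∑ i ∈ S, a i * v i) ≤ ∑ i ∈ S, v i := Finset.sum_le_sum fun i hi => by
      nlinarith [(ha i hi).1, (ha i hi).2, hv i hi]
    unfold mnlD; linarith
  exact ⟨div_nonneg hA0 hD.le, by rw [div_le_one hD]; exact hAD⟩

/-- **Proposition (variance: boundedness and Lipschitz condition).** -/
theorem variance_bounded_and_lipschitz {ι : Type*} (S : Finset ι) (r : ι → ℝ)
    (hr : ∀ i ∈ S, 0 < r i ∧ r i ≤ 1) :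
    (∀ v : ι → ℝ, (∀ i ∈ S, 0 ≤ v i ∧ v i ≤ 1) →
      0 ≤ mnlVar S r v ∧ mnlVar S r v ≤ 1 / 4) ∧
    (∀ v v' : ι → ℝ, (∀ i ∈ S, 0 ≤ v i ∧ v i ≤ 1) → (∀ i ∈ S, 0 ≤ v' i ∧ v' i ≤ 1) →
      (∀ i ∈ S, v i ≤ v' i) →
      |mnlVar S r v' - mnlVar S r v| ≤ (6 / mnlD S v) * ∑ i ∈ S, (v' i - v i)) := by
  have hr01 : ∀ i ∈ S, 0 ≤ r i ∧ r i ≤ 1 := fun i hi => ⟨(hr i hi).1.le, (hr i hi).2⟩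
  have hr2 : ∀ i ∈ S, 0 ≤ r i ^ 2 ∧ r i ^ 2 ≤ 1 := fun i hi =>
    ⟨sq_nonneg _, by nlinarith [(hr i hi).1, (hr i hi).2]⟩
  constructor
  · intro v hv
    have hv0 : ∀ i ∈ S, 0 ≤ v i := fun i hi => (hv i hi).1
    have hD : 0 < mnlD S v := mnlD_pos S v hv0
    set A : ℝ := ∑ i ∈ S, r i * v i with hAdef
    set B : ℝ := ∑ i ∈ S, r i ^ 2 * v i with hBdef
    have hB0 : 0 ≤ B := Finset.sum_nonneg fun i hi =>
      mul_nonneg (sq_nonneg _) (hv0 i hi)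
    have hCS : A ^ 2 ≤ B * ∑ i ∈ S, v i := by
      have h := Finset.sum_mul_sq_le_sq_mul_sq S
        (fun i => r i * Real.sqrt (v i)) (fun i => Real.sqrt (v i))
      have e1 : (∑ i ∈ S, (r i * Real.sqrt (v i)) * Real.sqrt (v i)) = A :=
        Finset.sum_congr rfl fun i hi => by
          rw [mul_assoc, Real.mul_self_sqrt (hv0 i hi)]
      have e2 : (∑ i ∈ S, (r i * Real.sqrt (v i)) ^ 2) = B :=
        Finset.sum_congr rfl fun i hi => by
          rw [mul_pow, Real.sq_sqrt (hv0 i hi)]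
      have e3 : (∑ i ∈ S, Real.sqrt (v i) ^ 2) = ∑ i ∈ S, v i :=
        Finset.sum_congr rfl fun i hi => Real.sq_sqrt (hv0 i hi)
      rw [e1, e2, e3] at h
      exact h
    have hsum : (∑ i ∈ S, v i) ≤ mnlD S v := by unfold mnlD; linarith
    have hA2 : A ^ 2 ≤ B * mnlD S v := le_trans hCS (by nlinarith)
    have hBA : B ≤ A := Finset.sum_le_sum fun i hi => by
      nlinarith [mul_nonneg (mul_nonneg (hr i hi).1.le
        (sub_nonneg.mpr (hr i hi).2)) (hv0 i hi)]
    have hmean := mnl_ratio_mem S r v hr01 hv0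
    constructor
    · unfold mnlVar mnlSecondMoment mnlMean
      rw [div_pow, sub_nonneg, div_le_div_iff₀ (by positivity) hD]
      nlinarith
    · unfold mnlVar mnlSecondMoment mnlMean
      have hBdiv : B / mnlD S v ≤ A / mnlD S v := by gcongr
      rw [← hAdef] at hmean
      rw [← hAdef, ← hBdef]
      nlinarith [hmean.1, hmean.2, hBdiv, sq_nonneg (A / mnlD S v - 1 / 2)]
  · intro v v' hv hv' hle
    have hv0 : ∀ i ∈ S, 0 ≤ v i := fun i hi => (hv i hi).1
    have hv0' : ∀ i ∈ S, 0 ≤ v' i := fun i hi => (hv' i hi).1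
    have hD : 0 < mnlD S v := mnlD_pos S v hv0
    set Δ : ℝ := ∑ i ∈ S, (v' i - v i) with hΔdef
    have hΔ0 : 0 ≤ Δ := Finset.sum_nonneg fun i hi => by linarith [hle i hi]
    have h1 := mnl_ratio_lipschitz S (fun i => r i ^ 2) v v' hr2 hv0 hv0' hle
    have h2 := mnl_ratio_lipschitz S r v v' hr01 hv0 hv0' hle
    have hm := mnl_ratio_mem S r v hr01 hv0
    have hm' := mnl_ratio_mem S r v' hr01 hv0'
    set μ : ℝ := mnlMean S r v with hμdef
    set μ' : ℝ := mnlMean S r v' with hμ'def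
    have h2' : |μ' - μ| ≤ Δ / mnlD S v := h2
    have hsq : |μ' ^ 2 - μ ^ 2| ≤ 2 * (Δ / mnlD S v) := by
      have e : μ' ^ 2 - μ ^ 2 = (μ' - μ) * (μ' + μ) := by ring
      rw [e, abs_mul]
      have hb : |μ' + μ| ≤ 2 := by
        rw [abs_le]
        constructor <;> [skip; skip] <;>
          · have := hm.1; have := hm.2; have := hm'.1; have := hm'.2
            unfold μ μ'; unfold mnlMean at *; linarith
      calc |μ' - μ| * |μ' + μ| ≤ (Δ / mnlD S v) * 2 := by
            apply mul_le_mul h2' hb (abs_nonneg _)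
            exact le_trans (abs_nonneg _) h2'
        _ = 2 * (Δ / mnlD S v) := by ring
    have hdec : mnlVar S r v' - mnlVar S r v =
        (mnlSecondMoment S r v' - mnlSecondMoment S r v) - (μ' ^ 2 - μ ^ 2) := by
      unfold mnlVar; ring
    have h1' : |mnlSecondMoment S r v' - mnlSecondMoment S r v| ≤ Δ / mnlD S v := h1
    have habs : |mnlVar S r v' - mnlVar S r v| ≤
        |mnlSecondMoment S r v' - mnlSecondMoment S r v| + |μ' ^ 2 - μ ^ 2| := by
      rw [hdec]; exact abs_sub _ _
    have hΔD : 0 ≤ Δ / mnlD S v := div_nonneg hΔ0 hD.le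
    have hgoal : (6 / mnlD S v) * Δ = 6 * (Δ / mnlD S v) := by ring
    rw [hgoal]
    linarith
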